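/- arXiv:2510.05440 — 4 statements merged into one kernel-verified Lean document; each statement's English description precedes it below -/
import Mathlib

section
/- Let d ≥ 1, let D be a distribution on {0,1}^d, let f, h_0, h_1 : {0,1}^d → {0,1}, and let ε > 0. Suppose Pr_{x∼D}[h_1(x) ≠ f(x)] > (1+ε)·Pr_{x∼D}[h_0(x) ≠ f(x)], and let S = {x ∈ {0,1}^d : h_0(x) ≠ h_1(x)}. Then D(S) > 0 and Pr_{x∼D|_S}[h_0(x) ≠ f(x)] < 1/2 − ε/(2(2+ε)). -/
/-- `D` is a probability distribution on a finite type: pointwise nonnegative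
and summing to one. -/
def IsDist {X : Type*} [Fintype X] (D : X → ℝ) : Prop :=
  (∀ x, 0 ≤ D x) ∧ ∑ x, D x = 1

open scoped Classical in
/-- `pr D P = Pr_{x ∼ D}[P x] = ∑_{x : P x} D x`. -/
noncomputable def pr {X : Type*} [Fintype X] (D : X → ℝ) (P : X → Prop) : ℝ :=
  ∑ x, if P x then D x else 0

/-- if `Pr_D[h1 ≠ f] > (1+ε)·Pr_D[h0 ≠ f]` and
`S = {x | h0 x ≠ h1 x}`, then `D(S) > 0` and
`Pr_{D|_S}[h0 ≠ f] < 1/2 − ε/(2(2+ε))`. -/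
theorem stmt0 (d : ℕ) (hd : 1 ≤ d)
    (D : (Fin d → Bool) → ℝ) (hD : IsDist D)
    (f h0 h1 : (Fin d → Bool) → Bool) (ε : ℝ) (hε : 0 < ε)
    (hyp : pr D (fun x => h1 x ≠ f x) > (1 + ε) * pr D (fun x => h0 x ≠ f x)) :
    0 < pr D (fun x => h0 x ≠ h1 x) ∧
    pr (fun x => (if h0 x ≠ h1 x then D x else 0) / pr D (fun x => h0 x ≠ h1 x))
        (fun x => h0 x ≠ f x)
      < 1 / 2 - ε / (2 * (2 + ε)) := by
  classical
  obtain ⟨hpos, -⟩ := hD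
  set a := pr D (fun x => h0 x ≠ f x ∧ h0 x ≠ h1 x) with ha
  set b := pr D (fun x => h1 x ≠ f x ∧ h0 x ≠ h1 x) with hb
  set c := pr D (fun x => h0 x ≠ f x ∧ h0 x = h1 x) with hc
  have hnn : ∀ (P : (Fin d → Bool) → Prop), 0 ≤ pr D P := by
    intro P
    refine Finset.sum_nonneg fun x _ => ?_
    split
    · exact hpos x
    · exact le_refl 0
  have hann : 0 ≤ a := hnn _
  have hbnn : 0 ≤ b := hnn _
  have hcnn : 0 ≤ c := hnn _
  have E1 : pr D (fun x => h0 x ≠ h1 x) = a + b := by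
    rw [ha, hb, pr, pr, pr, ← Finset.sum_add_distrib]
    refine Finset.sum_congr rfl fun x _ => ?_
    cases hh0 : h0 x <;> cases hh1 : h1 x <;> cases hf : f x <;>
      simp [hh0, hh1, hf]
  have E2 : pr D (fun x => h0 x ≠ f x) = a + c := by
    rw [ha, hc, pr, pr, pr, ← Finset.sum_add_distrib]
    refine Finset.sum_congr rfl fun x _ => ?_
    cases hh0 : h0 x <;> cases hh1 : h1 x <;> cases hf : f x <;>
      simp [hh0, hh1, hf]
  have E3 : pr D (fun x => h1 x ≠ f x) = b + c := by
    rw [hb, hc, pr, pr, pr, ← Finset.sum_add_distrib]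
    refine Finset.sum_congr rfl fun x _ => ?_
    cases hh0 : h0 x <;> cases hh1 : h1 x <;> cases hf : f x <;>
      simp [hh0, hh1, hf]
  -- from the hypothesis: b > (1+ε) a
  have key : b > (1 + ε) * a := by
    rw [E2, E3] at hyp
    nlinarith
  have hSpos : 0 < pr D (fun x => h0 x ≠ h1 x) := by
    rw [E1]; nlinarith
  refine ⟨hSpos, ?_⟩
  have E4 : pr (fun x => (if h0 x ≠ h1 x then D x else 0) /
      pr D (fun x => h0 x ≠ h1 x)) (fun x => h0 x ≠ f x)
      = a / pr D (fun x => h0 x ≠ h1 x) := by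
    simp only [ha, pr]
    rw [Finset.sum_div]
    refine Finset.sum_congr rfl fun x _ => ?_
    by_cases h1' : h0 x ≠ f x <;> by_cases h2' : h0 x ≠ h1 x <;>
      simp [h1', h2']
  rw [E4, E1]
  have h2ε : (0:ℝ) < 2 + ε := by linarith
  have htarget : 1 / 2 - ε / (2 * (2 + ε)) = 1 / (2 + ε) := by
    field_simp
    ring
  rw [htarget, div_lt_div_iff₀ (by nlinarith) h2ε]
  nlinarith
end

section
/- Let d ≥ 1, let D be a distribution on {0,1}^d, let f, h_0, h_1 : {0,1}^d → {0,1}, let ε > 0, and let β ∈ (0,1). Suppose Pr_{x∼D}[h_1(x) ≠ f(x)] > (1+ε)·Pr_{x∼D}[h_0(x) ≠ f(x)], and let S = {x : h_0(x) ≠ h_1(x)} (so D(S) > 0). Let Ĥ be any distribution on {0,1}^d with d_TV(Ĥ, D|_S) ≤ ε/(4(2+ε)), and let m ≥ 8·((2+ε)/ε)²·log(1/β). If x_1, …, x_m are drawn i.i.d. from Ĥ, then with probability at least 1 − β we have |{i ∈ [m] : h_0(x_i) ≠ f(x_i)}| < |{i ∈ [m] : h_1(x_i) ≠ f(x_i)}|.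 -/
/-- Total variation distance between two distributions on a finite type. -/
noncomputable def dTV {X : Type*} [Fintype X] (P Q : X → ℝ) : ℝ :=
  (1 / 2) * ∑ x, |P x - Q x|

open scoped Classical

section Helpers

variable {X : Type*} [Fintype X]

lemma pr_nonneg' {D : X → ℝ} (h : ∀ x, 0 ≤ D x) (P : X → Prop) : 0 ≤ pr D P := by
  unfold pr
  refine Finset.sum_nonneg fun x _ => ?_
  by_cases hx : P x <;> simp [hx, h x]

lemma sum_ite_eq_pr' {D : X → ℝ} (P : X → Prop) [DecidablePred P] :
    ∑ x, (if P x then D x else 0) = pr D P := by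
  unfold pr
  refine Finset.sum_congr rfl fun x _ => ?_
  by_cases h : P x <;> simp [h]

lemma pr_add_compl' (D : X → ℝ) (P : X → Prop) :
    pr D P + pr D (fun x => ¬ P x) = ∑ x, D x := by
  unfold pr
  rw [← Finset.sum_add_distrib]
  refine Finset.sum_congr rfl fun x _ => ?_
  by_cases h : P x <;> simp [h]

lemma pr_split' {D : X → ℝ} (P Q R : X → Prop)
    (h : ∀ x, P x ↔ (Q x ∨ R x)) (hdisj : ∀ x, ¬ (Q x ∧ R x)) :
    pr D P = pr D Q + pr D R := by
  unfold pr
  rw [← Finset.sum_add_distrib]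
  refine Finset.sum_congr rfl fun x _ => ?_
  by_cases hq : Q x
  · have hr : ¬ R x := fun hr => hdisj x ⟨hq, hr⟩
    have hp : P x := (h x).2 (Or.inl hq)
    simp [hq, hr, hp]
  · by_cases hr : R x
    · simp [hq, hr, (h x).2 (Or.inr hr)]
    · have hp : ¬ P x := fun hp => ((h x).1 hp).elim hq hr
      simp [hq, hr, hp]

lemma pr_le_total' {D : X → ℝ} (h : ∀ x, 0 ≤ D x) (P : X → Prop) :
    pr D P ≤ ∑ x, D x := by
  unfold pr
  refine Finset.sum_le_sum fun x _ => ?_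
  by_cases hx : P x <;> simp [hx, h x]

lemma pr_sub_le_dTV' {A B : X → ℝ} (hAB : ∑ x, A x = ∑ x, B x) (P : X → Prop) :
    pr A P - pr B P ≤ dTV A B := by
  set a := ∑ x, (if P x then A x - B x else 0) with ha
  set b := ∑ x, (if ¬ P x then A x - B x else 0) with hb
  have hab : a + b = 0 := by
    rw [ha, hb, ← Finset.sum_add_distrib]
    have hc : ∀ x ∈ (Finset.univ : Finset X),
        ((if P x then A x - B x else 0) + (if ¬ P x then A x - B x else 0)) = A x - B x := by
      intro x _; by_cases h : P x <;> simp [h]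
    rw [Finset.sum_congr rfl hc, Finset.sum_sub_distrib, hAB, sub_self]
  have hpr : pr A P - pr B P = a := by
    rw [ha]; unfold pr
    rw [← Finset.sum_sub_distrib]
    refine Finset.sum_congr rfl fun x _ => ?_
    by_cases h : P x <;> simp [h]
  have h1 : a ≤ ∑ x, (if P x then |A x - B x| else 0) := by
    rw [ha]
    refine Finset.sum_le_sum fun x _ => ?_
    by_cases h : P x <;> simp [h, le_abs_self]
  have h2 : -b ≤ ∑ x, (if ¬ P x then |A x - B x| else 0) := by
    rw [hb, ← Finset.sum_neg_distrib]
    refine Finset.sum_le_sum fun x _ => ?_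
    by_cases h : P x
    · rw [if_neg (not_not_intro h), if_neg (not_not_intro h)]; simp
    · rw [if_pos h, if_pos h]; exact neg_le_abs _
  have hsum : ∑ x, (if P x then |A x - B x| else 0) + ∑ x, (if ¬ P x then |A x - B x| else 0)
      = ∑ x, |A x - B x| := by
    rw [← Finset.sum_add_distrib]
    refine Finset.sum_congr rfl fun x _ => ?_
    by_cases h : P x <;> simp [h]
  have hd : dTV A B = (1/2) * ∑ x, |A x - B x| := rfl
  rw [hpr, hd]
  linarith

lemma dTV_comm' (A B : X → ℝ) : dTV A B = dTV B A := by
  unfold dTV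
  congr 1
  refine Finset.sum_congr rfl fun x _ => ?_
  exact abs_sub_comm _ _

end Helpers

lemma bool_tri : ∀ a b c : Bool, (a ≠ b) ↔ ((a ≠ c ∧ b = c) ∨ (b ≠ c ∧ a = c)) := by decide

lemma bool_tri_disj : ∀ a b c : Bool, ¬ ((a ≠ c ∧ b = c) ∧ (b ≠ c ∧ a = c)) := by decide

/-- The exponential weight used in the Chernoff argument. -/
noncomputable def gfun {X : Type*} (r : ℝ) (f h0 h1 : X → Bool) (x : X) : ℝ :=
  r ^ (if h0 x ≠ f x ∧ h1 x = f x then 1 else 0 : ℕ)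
    * r⁻¹ ^ (if h1 x ≠ f x ∧ h0 x = f x then 1 else 0 : ℕ)

lemma gfun_pos {X : Type*} {r : ℝ} (hr : 0 < r) (f h0 h1 : X → Bool) (x : X) :
    0 < gfun r f h0 h1 x := by
  unfold gfun; positivity

lemma sum_mul_gfun {X : Type*} [Fintype X] (Hhat : X → ℝ) (hsum : ∑ x, Hhat x = 1)
    (r : ℝ) (f h0 h1 : X → Bool) :
    ∑ x, Hhat x * gfun r f h0 h1 x
      = pr Hhat (fun x => h0 x ≠ f x ∧ h1 x = f x) * r
        + pr Hhat (fun x => h1 x ≠ f x ∧ h0 x = f x) * r⁻¹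
        + (1 - pr Hhat (fun x => h0 x ≠ f x ∧ h1 x = f x)
            - pr Hhat (fun x => h1 x ≠ f x ∧ h0 x = f x)) := by
  have hc : ∀ x ∈ (Finset.univ : Finset X),
      Hhat x * gfun r f h0 h1 x
        = r * (if h0 x ≠ f x ∧ h1 x = f x then Hhat x else 0)
          + r⁻¹ * (if h1 x ≠ f x ∧ h0 x = f x then Hhat x else 0)
          + (Hhat x - (if h0 x ≠ f x ∧ h1 x = f x then Hhat x else 0)
              - (if h1 x ≠ f x ∧ h0 x = f x then Hhat x else 0)) := by
    intro x _
    unfold gfun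
    by_cases hx0 : h0 x ≠ f x ∧ h1 x = f x
    · have hx1 : ¬ (h1 x ≠ f x ∧ h0 x = f x) := bool_tri_disj (h0 x) (h1 x) (f x) ∘ (⟨hx0, ·⟩)
      rw [if_pos hx0, if_pos hx0, if_neg hx1, if_neg hx1]
      ring
    · by_cases hx1 : h1 x ≠ f x ∧ h0 x = f x
      · rw [if_neg hx0, if_neg hx0, if_pos hx1, if_pos hx1]
        ring
      · rw [if_neg hx0, if_neg hx0, if_neg hx1, if_neg hx1]
        ring
  rw [Finset.sum_congr rfl hc, Finset.sum_add_distrib, Finset.sum_add_distrib,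
    ← Finset.mul_sum, ← Finset.mul_sum, Finset.sum_sub_distrib, Finset.sum_sub_distrib,
    hsum, sum_ite_eq_pr', sum_ite_eq_pr']
  ring

lemma prod_gfun {X : Type*} (r : ℝ) (f h0 h1 : X → Bool) (m : ℕ) (xs : Fin m → X) :
    ∏ i, gfun r f h0 h1 (xs i)
      = r ^ (∑ i, (if h0 (xs i) ≠ f (xs i) ∧ h1 (xs i) = f (xs i) then 1 else 0 : ℕ))
        * r⁻¹ ^ (∑ i, (if h1 (xs i) ≠ f (xs i) ∧ h0 (xs i) = f (xs i) then 1 else 0 : ℕ)) := by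
  unfold gfun
  rw [Finset.prod_mul_distrib, Finset.prod_pow_eq_pow_sum, Finset.prod_pow_eq_pow_sum]

lemma count_split0 {X : Type*} (f h0 h1 : X → Bool) (m : ℕ) (xs : Fin m → X) :
    (Finset.univ.filter (fun i => h0 (xs i) ≠ f (xs i))).card
      = (∑ i, (if h0 (xs i) ≠ f (xs i) ∧ h1 (xs i) = f (xs i) then 1 else 0 : ℕ))
        + ∑ i, (if h0 (xs i) ≠ f (xs i) ∧ h1 (xs i) ≠ f (xs i) then 1 else 0 : ℕ) := by
  rw [Finset.card_filter, ← Finset.sum_add_distrib]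
  refine Finset.sum_congr rfl fun i _ => ?_
  by_cases ha : h0 (xs i) = f (xs i) <;> by_cases hb : h1 (xs i) = f (xs i) <;> simp [ha, hb]

lemma count_split1 {X : Type*} (f h0 h1 : X → Bool) (m : ℕ) (xs : Fin m → X) :
    (Finset.univ.filter (fun i => h1 (xs i) ≠ f (xs i))).card
      = (∑ i, (if h1 (xs i) ≠ f (xs i) ∧ h0 (xs i) = f (xs i) then 1 else 0 : ℕ))
        + ∑ i, (if h0 (xs i) ≠ f (xs i) ∧ h1 (xs i) ≠ f (xs i) then 1 else 0 : ℕ) := by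
  rw [Finset.card_filter, ← Finset.sum_add_distrib]
  refine Finset.sum_congr rfl fun i _ => ?_
  by_cases ha : h0 (xs i) = f (xs i) <;> by_cases hb : h1 (xs i) = f (xs i) <;> simp [ha, hb]

lemma auxA (ε p0 q0 w : ℝ) (hε : 0 < ε) (hw : 0 ≤ w) (hp : 0 ≤ p0)
    (h : q0 + w > (1 + ε) * (p0 + w)) : q0 > (1 + ε) * p0 := by nlinarith

lemma auxB (ε p0 q0 : ℝ) (hε : 0 < ε) (hp : 0 ≤ p0) (h : q0 > (1 + ε) * p0) :
    0 < p0 + q0 := by nlinarith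

lemma auxGap (ε δ p0 q0 : ℝ) (hε : 0 < ε) (hp : 0 ≤ p0)
    (hδ : 2 * δ * (2 + ε) = ε) (h : q0 > (1 + ε) * p0) :
    2 * δ * (p0 + q0) ≤ q0 - p0 := by
  have h2 : ε * (p0 + q0) ≤ (q0 - p0) * (2 + ε) := by nlinarith
  have h3 : (2 * δ * (p0 + q0)) * (2 + ε) ≤ (q0 - p0) * (2 + ε) := by
    calc (2 * δ * (p0 + q0)) * (2 + ε) = (2 * δ * (2 + ε)) * (p0 + q0) := by ring
      _ = ε * (p0 + q0) := by rw [hδ]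
      _ ≤ (q0 - p0) * (2 + ε) := h2
  exact le_of_mul_le_mul_right h3 (by linarith)

lemma auxRR (r : ℝ) (hr0 : 0 < r) : 0 ≤ r + r⁻¹ - 2 := by
  have h : 0 ≤ (r - 1) ^ 2 * r⁻¹ := by positivity
  have hrr : r * r⁻¹ = 1 := mul_inv_cancel₀ hr0.ne'
  have hexp : (r - 1) ^ 2 * r⁻¹ = r * (r * r⁻¹) - 2 * (r * r⁻¹) + r⁻¹ := by ring
  rw [hrr] at hexp
  rw [hexp] at h
  linarith

lemma auxStep1 (δ r p q : ℝ) (hδ0 : 0 < δ) (hp0 : 0 ≤ p) (hqp : δ ≤ q - p)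
    (hpq1 : p + q ≤ 1) (hr1 : 1 ≤ r) (hrinv1 : r⁻¹ ≤ 1) (hrr : 0 ≤ r + r⁻¹ - 2) :
    p * r + q * r⁻¹ + (1 - p - q) ≤ ((1 - δ) / 2) * r + ((1 + δ) / 2) * r⁻¹ := by
  have ht1 : 0 ≤ (q - p - δ) * (1 - r⁻¹) := mul_nonneg (by linarith) (by linarith)
  have ht2 : 0 ≤ ((1 - δ) / 2 - p) * (r + r⁻¹ - 2) := mul_nonneg (by linarith) hrr
  nlinarith [ht1, ht2]

set_option maxHeartbeats 1000000 in
/-- suppose `Pr_D[h1 ≠ f] > (1+ε)·Pr_D[h0 ≠ f]`, let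
`S = {x : h0 x ≠ h1 x}`, let `Ĥ` be a distribution with
`d_TV(Ĥ, D|_S) ≤ ε/(4(2+ε))`, and let `m ≥ 8·((2+ε)/ε)²·log(1/β)`.
Drawing `x_1, …, x_m` i.i.d. from `Ĥ`, with probability at least `1 − β`
we have `|{i : h0(x_i) ≠ f(x_i)}| < |{i : h1(x_i) ≠ f(x_i)}|`. -/
theorem stmt8 (d : ℕ) (hd : 1 ≤ d)
    (D : (Fin d → Bool) → ℝ) (hD : IsDist D)
    (f h0 h1 : (Fin d → Bool) → Bool) (ε β : ℝ) (hε : 0 < ε)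
    (hβ0 : 0 < β) (hβ1 : β < 1)
    (hyp : pr D (fun x => h1 x ≠ f x) > (1 + ε) * pr D (fun x => h0 x ≠ f x))
    (Hhat : (Fin d → Bool) → ℝ) (hHhat : IsDist Hhat)
    (htv : dTV Hhat
        (fun x => (if h0 x ≠ h1 x then D x else 0) / pr D (fun x => h0 x ≠ h1 x))
      ≤ ε / (4 * (2 + ε)))
    (m : ℕ) (hm : (m : ℝ) ≥ 8 * ((2 + ε) / ε) ^ 2 * Real.log (1 / β)) :
    pr (fun xs : Fin m → (Fin d → Bool) => ∏ i, Hhat (xs i))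
        (fun xs =>
          (Finset.univ.filter (fun i => h0 (xs i) ≠ f (xs i))).card
            < (Finset.univ.filter (fun i => h1 (xs i) ≠ f (xs i))).card)
      ≥ 1 - β := by
  obtain ⟨hD0, hD1⟩ := hD
  obtain ⟨hH0, hH1⟩ := hHhat
  set E0 : (Fin d → Bool) → Prop := fun x => h0 x ≠ f x ∧ h1 x = f x with hE0def
  set E1 : (Fin d → Bool) → Prop := fun x => h1 x ≠ f x ∧ h0 x = f x with hE1def
  have hdisj : ∀ x, ¬ (E0 x ∧ E1 x) := fun x => bool_tri_disj (h0 x) (h1 x) (f x)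
  set δ : ℝ := ε / (2 * (2 + ε)) with hδdef
  have hε2 : (0:ℝ) < 2 + ε := by linarith only [hε]
  have hδ0 : 0 < δ := by positivity
  have hδhalf : δ < 1 / 2 := by
    rw [hδdef, div_lt_div_iff₀ (by linarith only [hε]) (by norm_num)]
    linarith only [hε]
  have h1δ : 0 < 1 - δ := by linarith only [hδhalf]
  -- probabilities under Hhat
  set p := pr Hhat E0 with hpdef
  set q := pr Hhat E1 with hqdef
  have hp0 : 0 ≤ p := pr_nonneg' hH0 E0
  have hq0 : 0 ≤ q := pr_nonneg' hH0 E1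
  have hpq1 : p + q ≤ 1 := by
    have h := pr_split' (D := Hhat) (fun x => E0 x ∨ E1 x) E0 E1 (fun x => Iff.rfl) hdisj
    rw [← h]
    calc pr Hhat (fun x => E0 x ∨ E1 x) ≤ ∑ x, Hhat x := pr_le_total' hH0 _
      _ = 1 := hH1
  -- probabilities under D
  set p0 := pr D E0 with hp0def
  set q0 := pr D E1 with hq0def
  set w := pr D (fun x => h0 x ≠ f x ∧ h1 x ≠ f x) with hwdef
  have hw0 : 0 ≤ w := pr_nonneg' hD0 _
  have hp00 : 0 ≤ p0 := pr_nonneg' hD0 _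
  have hsplit1 : pr D (fun x => h1 x ≠ f x) = q0 + w := by
    refine pr_split' _ _ _ (fun x => ?_) (fun x => ?_)
    · constructor
      · intro h
        by_cases hb : h0 x = f x
        · exact Or.inl ⟨h, hb⟩
        · exact Or.inr ⟨hb, h⟩
      · rintro (⟨h, _⟩ | ⟨_, h⟩) <;> exact h
    · rintro ⟨⟨_, hb⟩, ⟨hb', _⟩⟩; exact hb' hb
  have hsplit0 : pr D (fun x => h0 x ≠ f x) = p0 + w := by
    refine pr_split' _ _ _ (fun x => ?_) (fun x => ?_)
    · constructor
      · intro h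
        by_cases hb : h1 x = f x
        · exact Or.inl ⟨h, hb⟩
        · exact Or.inr ⟨h, hb⟩
      · rintro (⟨h, _⟩ | ⟨h, _⟩) <;> exact h
    · rintro ⟨⟨_, hb⟩, ⟨_, hb'⟩⟩; exact hb' hb
  rw [hsplit1, hsplit0] at hyp
  have hq0p0 : q0 > (1 + ε) * p0 := auxA ε p0 q0 w hε hw0 hp00 hyp
  set s := pr D (fun x => h0 x ≠ h1 x) with hsdef
  have hs_eq : s = p0 + q0 :=
    pr_split' _ _ _ (fun x => bool_tri (h0 x) (h1 x) (f x)) (fun x => bool_tri_disj (h0 x) (h1 x) (f x))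
  have hs_pos : 0 < s := by rw [hs_eq]; exact auxB ε p0 q0 hε hp00 hq0p0
  -- conditional distribution
  set Dc : (Fin d → Bool) → ℝ :=
    fun x => (if h0 x ≠ h1 x then D x else 0) / pr D (fun x => h0 x ≠ h1 x) with hDcdef
  have hDc_sum : ∑ x, Dc x = 1 := by
    rw [hDcdef]
    rw [← Finset.sum_div, sum_ite_eq_pr', ← hsdef, div_self hs_pos.ne']
  have hDcE0 : pr Dc E0 = p0 / s := by
    rw [hp0def]
    unfold pr
    rw [Finset.sum_div]
    refine Finset.sum_congr rfl fun x _ => ?_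
    by_cases h : E0 x
    · rw [if_pos h, if_pos h]
      show (if h0 x ≠ h1 x then D x else 0) / s = D x / s
      rw [if_pos ((bool_tri (h0 x) (h1 x) (f x)).2 (Or.inl h))]
    · rw [if_neg h, if_neg h, zero_div]
  have hDcE1 : pr Dc E1 = q0 / s := by
    rw [hq0def]
    unfold pr
    rw [Finset.sum_div]
    refine Finset.sum_congr rfl fun x _ => ?_
    by_cases h : E1 x
    · rw [if_pos h, if_pos h]
      show (if h0 x ≠ h1 x then D x else 0) / s = D x / s
      rw [if_pos ((bool_tri (h0 x) (h1 x) (f x)).2 (Or.inr h))]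
    · rw [if_neg h, if_neg h, zero_div]
  -- transfer via dTV
  have hsums : ∑ x, Hhat x = ∑ x, Dc x := by rw [hH1, hDc_sum]
  have htv' : dTV Hhat Dc ≤ δ / 2 := by
    have he : ε / (4 * (2 + ε)) = δ / 2 := by
      rw [hδdef, div_div]
      congr 1
      ring
    rw [← he]; exact htv
  have htrans1 : p - p0 / s ≤ δ / 2 := by
    have h := pr_sub_le_dTV' hsums E0
    rw [hDcE0] at h
    linarith only [h, htv']
  have htrans2 : q0 / s - q ≤ δ / 2 := by
    have h := pr_sub_le_dTV' hsums.symm E1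
    rw [hDcE1, dTV_comm'] at h
    linarith only [h, htv']
  have hgap : q0 / s - p0 / s ≥ 2 * δ := by
    rw [div_sub_div_same, ge_iff_le, le_div_iff₀ hs_pos]
    have hc : 2 * δ * (2 + ε) = ε := by
      rw [hδdef]
      field_simp
    rw [hs_eq]
    exact auxGap ε δ p0 q0 hε hp00 hc hq0p0
  have hqp : q - p ≥ δ := by linarith only [htrans1, htrans2, hgap]
  -- the exponential weight
  set r := Real.sqrt ((1 + δ) / (1 - δ)) with hrdef
  have hr2 : r ^ 2 = (1 + δ) / (1 - δ) := Real.sq_sqrt (by positivity)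
  have hr0 : 0 < r := Real.sqrt_pos.2 (by positivity)
  have hr1 : 1 ≤ r := by
    have h1 : (1:ℝ) ≤ (1 + δ) / (1 - δ) := by rw [le_div_iff₀ h1δ]; linarith only [hδ0]
    calc (1:ℝ) = Real.sqrt 1 := Real.sqrt_one.symm
      _ ≤ r := Real.sqrt_le_sqrt h1
  have hrinv0 : 0 < r⁻¹ := by positivity
  have hrinv1 : r⁻¹ ≤ 1 := by
    rw [inv_le_one_iff₀]; right; exact hr1
  set G := ∑ x, Hhat x * gfun r f h0 h1 x with hGdef
  have hGval : G = p * r + q * r⁻¹ + (1 - p - q) := sum_mul_gfun Hhat hH1 r f h0 h1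
  have hG0 : 0 ≤ G := by
    rw [hGval]
    linarith only [mul_nonneg hp0 hr0.le, mul_nonneg hq0 hrinv0.le, hpq1]
  have hGbound : G ≤ Real.exp (-(δ ^ 2) / 2) := by
    have hstep1 : G ≤ ((1 - δ) / 2) * r + ((1 + δ) / 2) * r⁻¹ := by
      rw [hGval]
      exact auxStep1 δ r p q hδ0 hp0 hqp hpq1 hr1 hrinv1 (auxRR r hr0)
    have hrinv2 : (r⁻¹) ^ 2 = (1 - δ) / (1 + δ) := by
      rw [inv_pow, hr2, inv_div]
    have hrmul : r * r⁻¹ = 1 := mul_inv_cancel₀ hr0.ne'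
    set L := ((1 - δ) / 2) * r + ((1 + δ) / 2) * r⁻¹ with hLdef
    have hL0 : 0 ≤ L := by positivity
    have hL2 : L ^ 2 = 1 - δ ^ 2 := by
      have hexp : L ^ 2 = ((1 - δ) / 2) ^ 2 * r ^ 2
          + 2 * ((1 - δ) / 2) * ((1 + δ) / 2) * (r * r⁻¹)
          + ((1 + δ) / 2) ^ 2 * (r⁻¹) ^ 2 := by rw [hLdef]; ring
      rw [hexp, hr2, hrinv2, hrmul]
      field_simp
      ring
    have hsq : L ^ 2 ≤ (Real.exp (-(δ ^ 2) / 2)) ^ 2 := by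
      rw [hL2, ← Real.exp_nat_mul]
      have h2 : ((2:ℕ):ℝ) * (-(δ ^ 2) / 2) = -(δ ^ 2) := by push_cast; ring
      rw [h2]
      linarith only [Real.add_one_le_exp (-(δ ^ 2))]
    have hLle : L ≤ Real.exp (-(δ ^ 2) / 2) := by
      have h := Real.sqrt_le_sqrt hsq
      rwa [Real.sqrt_sq hL0, Real.sqrt_sq (Real.exp_pos _).le] at h
    exact le_trans hstep1 hLle
  -- product space
  set W : (Fin m → (Fin d → Bool)) → ℝ := fun xs => ∏ i, Hhat (xs i) with hWdef
  have hW0 : ∀ xs, 0 ≤ W xs := fun xs => Finset.prod_nonneg fun i _ => hH0 _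
  have hWsum : ∑ xs, W xs = 1 := by
    rw [hWdef, ← Fintype.sum_pow, hH1, one_pow]
  have hEg : ∑ xs, W xs * ∏ i, gfun r f h0 h1 (xs i) = G ^ m := by
    rw [hGdef, Fintype.sum_pow]
    refine Finset.sum_congr rfl fun xs _ => ?_
    exact Finset.prod_mul_distrib.symm
  set P : (Fin m → (Fin d → Bool)) → Prop := fun xs =>
    (Finset.univ.filter (fun i => h0 (xs i) ≠ f (xs i))).card
      < (Finset.univ.filter (fun i => h1 (xs i) ≠ f (xs i))).card with hPdef
  have hmarkov : pr W (fun xs => ¬ P xs) ≤ G ^ m := by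
    rw [← hEg]
    unfold pr
    refine Finset.sum_le_sum fun xs _ => ?_
    by_cases hev : ¬ P xs
    · rw [if_pos hev]
      have hA := count_split0 f h0 h1 m xs
      have hB := count_split1 f h0 h1 m xs
      have hev' : ¬ ((Finset.univ.filter (fun i => h0 (xs i) ≠ f (xs i))).card
          < (Finset.univ.filter (fun i => h1 (xs i) ≠ f (xs i))).card) := hev
      have hBA : (∑ i, (if h1 (xs i) ≠ f (xs i) ∧ h0 (xs i) = f (xs i) then 1 else 0 : ℕ))
          ≤ ∑ i, (if h0 (xs i) ≠ f (xs i) ∧ h1 (xs i) = f (xs i) then 1 else 0 : ℕ) := by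
        omega
      have hge1 : 1 ≤ ∏ i, gfun r f h0 h1 (xs i) := by
        rw [prod_gfun]
        have hpw : r ^ (∑ i, (if h1 (xs i) ≠ f (xs i) ∧ h0 (xs i) = f (xs i) then 1 else 0 : ℕ))
            ≤ r ^ (∑ i, (if h0 (xs i) ≠ f (xs i) ∧ h1 (xs i) = f (xs i) then 1 else 0 : ℕ)) :=
          pow_le_pow_right₀ hr1 hBA
        calc (1:ℝ) = r ^ (∑ i, (if h1 (xs i) ≠ f (xs i) ∧ h0 (xs i) = f (xs i) then 1 else 0 : ℕ))
              * r⁻¹ ^ (∑ i, (if h1 (xs i) ≠ f (xs i) ∧ h0 (xs i) = f (xs i) then 1 else 0 : ℕ)) := by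
              rw [← mul_pow, mul_inv_cancel₀ hr0.ne', one_pow]
          _ ≤ _ := mul_le_mul_of_nonneg_right hpw (by positivity)
      exact le_mul_of_one_le_right (hW0 xs) hge1
    · rw [if_neg hev]
      exact mul_nonneg (hW0 xs) (Finset.prod_nonneg fun i _ => (gfun_pos hr0 f h0 h1 _).le)
  -- final numeric bound
  have hGm : G ^ m ≤ β := by
    have h1 : G ^ m ≤ (Real.exp (-(δ ^ 2) / 2)) ^ m := pow_le_pow_left₀ hG0 hGbound m
    have h2 : (Real.exp (-(δ ^ 2) / 2)) ^ m = Real.exp ((m : ℝ) * (-(δ ^ 2) / 2)) :=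
      (Real.exp_nat_mul _ m).symm
    have hlog : Real.log (1 / β) = - Real.log β := by rw [one_div, Real.log_inv]
    have hcoef : 8 * ((2 + ε) / ε) ^ 2 * δ ^ 2 = 2 := by
      rw [hδdef]; field_simp; ring
    have h2L : 2 * Real.log (1 / β) ≤ (m : ℝ) * δ ^ 2 := by
      have h := mul_le_mul_of_nonneg_right hm (sq_nonneg δ)
      calc 2 * Real.log (1 / β)
          = (8 * ((2 + ε) / ε) ^ 2 * δ ^ 2) * Real.log (1 / β) := by rw [hcoef]
        _ = 8 * ((2 + ε) / ε) ^ 2 * Real.log (1 / β) * δ ^ 2 := by ring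
        _ ≤ (m : ℝ) * δ ^ 2 := h
    have h3 : (m : ℝ) * (-(δ ^ 2) / 2) ≤ Real.log β := by
      rw [hlog] at h2L
      linarith only [h2L]
    calc G ^ m ≤ Real.exp ((m : ℝ) * (-(δ ^ 2) / 2)) := h2 ▸ h1
      _ ≤ Real.exp (Real.log β) := Real.exp_le_exp.2 h3
      _ = β := Real.exp_log hβ0
  have hcomp := pr_add_compl' W P
  rw [hWsum] at hcomp
  have hfin : pr W (fun xs => ¬ P xs) ≤ β := le_trans hmarkov hGm
  have hgoal : pr W P ≥ 1 - β := by linarith only [hcomp, hfin]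
  exact hgoal
end

section
/- Let d ≥ 1, let D be a distribution on {0,1}^d, let Y be a metric space with distance ℓ, let f, h_0, h_1 : {0,1}^d → Y, let ε > 0, and let β ∈ (0,1). Suppose E_{x∼D}[ℓ(h_1(x), f(x))] > (3+ε)·E_{x∼D}[ℓ(h_0(x), f(x))] (so μ = E_{x∼D}[ℓ(h_0(x), h_1(x))] > 0). Let Ĥ be any distribution on {0,1}^d with d_TV(Ĥ, D_{h_0,h_1}) ≤ ε/(4(2+ε)), let m ≥ 8·((2+ε)/ε)²·log(4/β), and draw x_1, …, x_m i.i.d. from Ĥ. For b ∈ {0,1} set R̂_b = (1/m)·∑_{i∈[m]} r_b(x_i). Then with probability at least 1 − β we have R̂_0 < R̂_1. -/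
open Finset

/-- chord bound: for `|x| ≤ 1`, `exp (-(t*x)) ≤ (1-x)/2 * exp t + (1+x)/2 * exp (-t)`. -/
lemma chord (t x : ℝ) (hx : |x| ≤ 1) :
    Real.exp (-(t * x)) ≤ (1 - x) / 2 * Real.exp t + (1 + x) / 2 * Real.exp (-t) := by
  obtain ⟨hx1, hx2⟩ := abs_le.mp hx
  have h := convexOn_exp.2 (Set.mem_univ t) (Set.mem_univ (-t))
    (by linarith : (0:ℝ) ≤ (1 - x) / 2) (by linarith : (0:ℝ) ≤ (1 + x) / 2) (by ring)
  simp only [smul_eq_mul] at h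
  convert h using 2
  · rfl
  · ring

set_option maxHeartbeats 1000000 in
/-- Core concentration bound. -/
lemma concA {X : Type*} [Fintype X] (H : X → ℝ) (hH0 : ∀ x, 0 ≤ H x)
    (hH1 : ∑ x, H x = 1)
    (g : X → ℝ) (hg : ∀ x, |g x| ≤ 1) (q : ℝ) (hq0 : 0 < q) (hq1 : q < 1)
    (hEg : q ≤ ∑ x, H x * g x) (m : ℕ) :
    ∑ xs : Fin m → X, (if (∑ i, g (xs i)) ≤ 0 then ∏ i, H (xs i) else 0)
      ≤ Real.exp (-(m : ℝ) * q ^ 2 / 2) := by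
  classical
  set u := Real.sqrt ((1 + q) / (1 - q)) with hu
  have hfrac1 : (1:ℝ) ≤ (1 + q) / (1 - q) := by
    rw [le_div_iff₀ (by linarith)]; linarith
  have hu1 : 1 ≤ u := by
    have h := Real.sqrt_le_sqrt hfrac1
    rwa [Real.sqrt_one] at h
  have hu0 : 0 < u := by linarith
  have husq : u ^ 2 = (1 + q) / (1 - q) := Real.sq_sqrt (by linarith)
  set t := Real.log u with ht
  have ht0 : 0 ≤ t := Real.log_nonneg hu1
  have het : Real.exp t = u := Real.exp_log hu0
  have hent : Real.exp (-t) = u⁻¹ := by rw [Real.exp_neg, het]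
  set S := ∑ x, H x * Real.exp (-(t * g x)) with hS
  have hS0 : 0 ≤ S := Finset.sum_nonneg fun x _ =>
    mul_nonneg (hH0 x) (Real.exp_pos _).le
  -- bound S ≤ (1+q)/u
  have hSle : S ≤ (1 + q) / u := by
    have h1 : S ≤ ∑ x, H x * ((1 - g x) / 2 * u + (1 + g x) / 2 * u⁻¹) := by
      apply Finset.sum_le_sum
      intro x _
      have := chord t (g x) (hg x)
      rw [het, hent] at this
      exact mul_le_mul_of_nonneg_left this (hH0 x)
    have h2 : ∑ x, H x * ((1 - g x) / 2 * u + (1 + g x) / 2 * u⁻¹)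
        = (u + u⁻¹) / 2 * (∑ x, H x) - (u - u⁻¹) / 2 * (∑ x, H x * g x) := by
      rw [Finset.mul_sum, Finset.mul_sum, ← Finset.sum_sub_distrib]
      apply Finset.sum_congr rfl
      intro x _; ring
    have hsinh : 0 ≤ (u - u⁻¹) / 2 := by
      have : u⁻¹ ≤ 1 := inv_le_one_of_one_le₀ hu1
      linarith
    have h3 : (u - u⁻¹) / 2 * q ≤ (u - u⁻¹) / 2 * (∑ x, H x * g x) :=
      mul_le_mul_of_nonneg_left hEg hsinh
    have huu : u * u * (1 - q) = 1 + q := by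
      have h := husq
      rw [eq_div_iff (by linarith : (1:ℝ) - q ≠ 0)] at h
      nlinarith [h]
    have hinv : u * u⁻¹ = 1 := mul_inv_cancel₀ (ne_of_gt hu0)
    have h4 : (u + u⁻¹) / 2 - (u - u⁻¹) / 2 * q = (1 + q) / u := by
      rw [eq_div_iff (ne_of_gt hu0)]
      linear_combination (1/2) * huu + ((1+q)/2) * hinv
    calc S ≤ (u + u⁻¹) / 2 * (∑ x, H x) - (u - u⁻¹) / 2 * (∑ x, H x * g x) := by
            rw [← h2]; exact h1
      _ ≤ (u + u⁻¹) / 2 - (u - u⁻¹) / 2 * q := by rw [hH1]; linarith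
      _ = (1 + q) / u := h4
  have hSexp : S ≤ Real.exp (-q ^ 2 / 2) := by
    have hc0 : 0 < Real.exp (-q ^ 2 / 2) := Real.exp_pos _
    have huu : u * u * (1 - q) = 1 + q := by
      have h := husq
      rw [eq_div_iff (by linarith : (1:ℝ) - q ≠ 0)] at h
      nlinarith [h]
    have hsq : ((1 + q) / u) ^ 2 = 1 - q ^ 2 := by
      rw [div_pow]
      rw [div_eq_iff (by positivity : u ^ 2 ≠ 0)]
      linear_combination (-(1 + q)) * huu
    have hcc : Real.exp (-q ^ 2 / 2) ^ 2 = Real.exp (-q ^ 2) := by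
      rw [← Real.exp_nat_mul]
      push_cast
      ring_nf
    have hsq2 : 1 - q ^ 2 ≤ Real.exp (-q ^ 2 / 2) ^ 2 := by
      rw [hcc]
      have h := Real.add_one_le_exp (-q ^ 2)
      linarith
    have hx0 : 0 < (1 + q) / u := div_pos (by linarith) hu0
    have : (1 + q) / u ≤ Real.exp (-q ^ 2 / 2) := by
      nlinarith [hsq, hsq2]
    linarith
  -- Markov step
  have hMarkov : ∑ xs : Fin m → X, (if (∑ i, g (xs i)) ≤ 0 then ∏ i, H (xs i) else 0)
      ≤ ∑ xs : Fin m → X, ∏ i, (H (xs i) * Real.exp (-(t * g (xs i)))) := by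
    apply Finset.sum_le_sum
    intro xs _
    have hprodpos : 0 ≤ ∏ i, (H (xs i) * Real.exp (-(t * g (xs i)))) :=
      Finset.prod_nonneg fun i _ => mul_nonneg (hH0 _) (Real.exp_pos _).le
    by_cases hc : (∑ i, g (xs i)) ≤ 0
    · simp only [hc, if_true]
      have hfac : ∏ i, (H (xs i) * Real.exp (-(t * g (xs i))))
          = (∏ i, H (xs i)) * Real.exp (∑ i, -(t * g (xs i))) := by
        rw [Real.exp_sum, Finset.prod_mul_distrib]
      have hexp1 : 1 ≤ Real.exp (∑ i, -(t * g (xs i))) := by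
        apply Real.one_le_exp
        have heq : ∑ i, -(t * g (xs i)) = t * (-∑ i, g (xs i)) := by
          rw [mul_neg, Finset.mul_sum, ← Finset.sum_neg_distrib]
        rw [heq]
        exact mul_nonneg ht0 (by linarith)
      rw [hfac]
      have hp0 : 0 ≤ ∏ i, H (xs i) := Finset.prod_nonneg fun i _ => hH0 _
      nlinarith
    · simp only [hc, if_false]; exact hprodpos
  have hfactor : ∑ xs : Fin m → X, ∏ i, (H (xs i) * Real.exp (-(t * g (xs i)))) = S ^ m := by
    rw [hS, Fintype.sum_pow]
  have hpow : S ^ m ≤ Real.exp (-q ^ 2 / 2) ^ m := pow_le_pow_left₀ hS0 hSexp m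
  have hexp : Real.exp (-q ^ 2 / 2) ^ m = Real.exp (-(m:ℝ) * q ^ 2 / 2) := by
    rw [← Real.exp_nat_mul]; ring_nf
  calc ∑ xs : Fin m → X, (if (∑ i, g (xs i)) ≤ 0 then ∏ i, H (xs i) else 0)
      ≤ S ^ m := by rw [← hfactor]; exact hMarkov
    _ ≤ Real.exp (-q ^ 2 / 2) ^ m := hpow
    _ = Real.exp (-(m:ℝ) * q ^ 2 / 2) := hexp

set_option maxHeartbeats 1000000 in
/-- suppose `E_D[ℓ(h1,f)] > (3+ε)·E_D[ℓ(h0,f)]`, let `Ĥ` be a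
distribution with `d_TV(Ĥ, D_{h0,h1}) ≤ ε/(4(2+ε))` where
`D_{h0,h1}(x) = D(x)·Δ(x)/μ`, and let `m ≥ 8·((2+ε)/ε)²·log(4/β)`.
Drawing `x_1, …, x_m` i.i.d. from `Ĥ` and setting
`R̂_b = (1/m)·∑_i r_b(x_i)` with `r_b(x) = ℓ_b(x)/(ℓ_0(x)+ℓ_1(x))`
(value `0` when the denominator vanishes, matching Lean's `x / 0 = 0`),
with probability at least `1 − β` we have `R̂_0 < R̂_1`. -/
theorem stmt9 (d : ℕ) (hd : 1 ≤ d) {Y : Type*} [MetricSpace Y]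
    (D : (Fin d → Bool) → ℝ) (hD : IsDist D)
    (f h0 h1 : (Fin d → Bool) → Y) (ε β : ℝ) (hε : 0 < ε)
    (hβ0 : 0 < β) (hβ1 : β < 1)
    (hyp : ∑ x, D x * dist (h1 x) (f x)
         > (3 + ε) * ∑ x, D x * dist (h0 x) (f x))
    (Hhat : (Fin d → Bool) → ℝ) (hHhat : IsDist Hhat)
    (htv : dTV Hhat
        (fun x => D x * dist (h0 x) (h1 x)
            / ∑ x', D x' * dist (h0 x') (h1 x'))
      ≤ ε / (4 * (2 + ε)))
    (m : ℕ) (hm : (m : ℝ) ≥ 8 * ((2 + ε) / ε) ^ 2 * Real.log (4 / β)) :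
    pr (fun xs : Fin m → (Fin d → Bool) => ∏ i, Hhat (xs i))
        (fun xs =>
          (1 / (m : ℝ)) * ∑ i, dist (h0 (xs i)) (f (xs i))
              / (dist (h0 (xs i)) (f (xs i)) + dist (h1 (xs i)) (f (xs i)))
            < (1 / (m : ℝ)) * ∑ i, dist (h1 (xs i)) (f (xs i))
              / (dist (h0 (xs i)) (f (xs i)) + dist (h1 (xs i)) (f (xs i))))
      ≥ 1 - β := by
  classical
  obtain ⟨hD0, hD1⟩ := hD
  obtain ⟨hH0, hH1⟩ := hHhat
  -- notation
  set r0 : (Fin d → Bool) → ℝ := fun x => dist (h0 x) (f x) / (dist (h0 x) (f x) + dist (h1 x) (f x))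
    with hr0
  set r1 : (Fin d → Bool) → ℝ := fun x => dist (h1 x) (f x) / (dist (h0 x) (f x) + dist (h1 x) (f x))
    with hr1
  set g : (Fin d → Bool) → ℝ := fun x => r1 x - r0 x with hg
  set q : ℝ := ε / (2 * (2 + ε)) with hqdef
  have h2e : (0:ℝ) < 2 + ε := by linarith
  have hq0 : 0 < q := by rw [hqdef]; positivity
  have hq1 : q < 1 := by
    rw [hqdef, div_lt_one (by positivity)]; linarith
  set a := ∑ x, D x * dist (h0 x) (f x) with ha
  set b := ∑ x, D x * dist (h1 x) (f x) with hb
  set μ := ∑ x, D x * dist (h0 x) (h1 x) with hμ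
  have ha0 : 0 ≤ a :=
    Finset.sum_nonneg fun x _ => mul_nonneg (hD0 x) dist_nonneg
  have hμ_ge : b - a ≤ μ := by
    rw [ha, hb, hμ, ← Finset.sum_sub_distrib]
    apply Finset.sum_le_sum
    intro x _
    have htri := dist_triangle (h1 x) (h0 x) (f x)
    rw [dist_comm (h1 x) (h0 x)] at htri
    nlinarith [hD0 x]
  have hμpos : 0 < μ := by nlinarith
  -- pointwise key inequality
  have hkey : ∀ x : (Fin d → Bool), dist (h0 x) (h1 x) - 2 * dist (h0 x) (f x)
      ≤ dist (h0 x) (h1 x) * g x := by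
    intro x
    have hl0 : (0:ℝ) ≤ dist (h0 x) (f x) := dist_nonneg
    have hl1 : (0:ℝ) ≤ dist (h1 x) (f x) := dist_nonneg
    have hΔ0 : (0:ℝ) ≤ dist (h0 x) (h1 x) := dist_nonneg
    have hΔs : dist (h0 x) (h1 x) ≤ dist (h0 x) (f x) + dist (h1 x) (f x) := by
      have := dist_triangle (h0 x) (f x) (h1 x)
      rw [dist_comm (f x) (h1 x)] at this
      linarith
    have hgx : g x = (dist (h1 x) (f x) - dist (h0 x) (f x))
        / (dist (h0 x) (f x) + dist (h1 x) (f x)) := by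
      rw [hg, hr0, hr1]
      simp only
      rw [div_sub_div_same]
    rcases eq_or_lt_of_le (by linarith : (0:ℝ) ≤ dist (h0 x) (f x) + dist (h1 x) (f x))
      with hs | hs
    · have h0' : dist (h0 x) (f x) = 0 := by linarith
      have h1' : dist (h1 x) (f x) = 0 := by linarith
      have hΔ' : dist (h0 x) (h1 x) = 0 := by linarith
      rw [hgx, h0', h1', hΔ']
      norm_num
    · rw [hgx, mul_div_assoc']
      rw [le_div_iff₀ hs]
      nlinarith [mul_le_mul_of_nonneg_left hΔs hl0]
  -- |g| ≤ 1
  have hgabs : ∀ x : (Fin d → Bool), |g x| ≤ 1 := by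
    intro x
    have hl0 : (0:ℝ) ≤ dist (h0 x) (f x) := dist_nonneg
    have hl1 : (0:ℝ) ≤ dist (h1 x) (f x) := dist_nonneg
    have h01 : 0 ≤ r0 x := div_nonneg hl0 (by linarith)
    have h02 : r0 x ≤ 1 := div_le_one_of_le₀ (by linarith) (by linarith)
    have h11 : 0 ≤ r1 x := div_nonneg hl1 (by linarith)
    have h12 : r1 x ≤ 1 := div_le_one_of_le₀ (by linarith) (by linarith)
    rw [abs_le, hg]
    constructor <;> simp only <;> linarith
  -- expectation under loss-rescaled distribution
  set Dp : (Fin d → Bool) → ℝ := fun x => D x * dist (h0 x) (h1 x) / μ with hDp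
  have hDpg : 2 * q ≤ ∑ x, Dp x * g x := by
    have e1 : ∑ x, Dp x * g x = (∑ x, D x * dist (h0 x) (h1 x) * g x) / μ := by
      rw [Finset.sum_div]
      apply Finset.sum_congr rfl
      intro x _
      rw [hDp]
      ring
    have e2 : μ - 2 * a ≤ ∑ x, D x * dist (h0 x) (h1 x) * g x := by
      have : ∑ x, (D x * dist (h0 x) (h1 x) - 2 * (D x * dist (h0 x) (f x)))
          ≤ ∑ x, D x * dist (h0 x) (h1 x) * g x := by
        apply Finset.sum_le_sum
        intro x _
        have := hkey x
        have hd0 := hD0 x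
        nlinarith
      calc μ - 2 * a = ∑ x, (D x * dist (h0 x) (h1 x) - 2 * (D x * dist (h0 x) (f x))) := by
            rw [hμ, ha, Finset.sum_sub_distrib, ← Finset.mul_sum]
        _ ≤ _ := this
    rw [e1, le_div_iff₀ hμpos]
    have hμa : (2 + ε) * a ≤ μ := by nlinarith
    have hq2 : 2 * q * (2 + ε) = ε := by
      rw [hqdef]; field_simp
    nlinarith [mul_le_mul_of_nonneg_left hμa (le_of_lt hq0)]
  -- TV shift
  have hHg : q ≤ ∑ x, Hhat x * g x := by
    have hdiff : ∑ x, Dp x * g x - ∑ x, Hhat x * g x ≤ ∑ x, |Hhat x - Dp x| := by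
      rw [← Finset.sum_sub_distrib]
      apply Finset.sum_le_sum
      intro x _
      have h1' : (Dp x - Hhat x) * g x ≤ |(Dp x - Hhat x) * g x| := le_abs_self _
      have h2' : |(Dp x - Hhat x) * g x| ≤ |Dp x - Hhat x| * 1 := by
        rw [abs_mul]
        exact mul_le_mul_of_nonneg_left (hgabs x) (abs_nonneg _)
      rw [abs_sub_comm (Dp x) (Hhat x)] at h2'
      calc Dp x * g x - Hhat x * g x = (Dp x - Hhat x) * g x := by ring
        _ ≤ |Hhat x - Dp x| * 1 := le_trans h1' h2'
        _ = |Hhat x - Dp x| := mul_one _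
    have htv2 : ∑ x, |Hhat x - Dp x| ≤ q := by
      have : dTV Hhat Dp ≤ ε / (4 * (2 + ε)) := htv
      rw [dTV] at this
      have hq3 : ε / (4 * (2 + ε)) = q / 2 := by
        rw [hqdef, div_div]
        congr 1
        ring
      linarith [this, hq3 ▸ this]
    linarith
  -- m ≥ 1
  have hlog : 0 < Real.log (4 / β) := by
    apply Real.log_pos
    rw [lt_div_iff₀ hβ0]; linarith
  have hmpos : 0 < (m:ℝ) := by
    have : (0:ℝ) < 8 * ((2 + ε) / ε) ^ 2 * Real.log (4 / β) := by positivity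
    linarith
  have hm0 : 0 < m := by exact_mod_cast hmpos
  -- apply concentration
  have hconc := concA Hhat hH0 hH1 g hgabs q hq0 hq1 hHg m
  -- exp bound ≤ β
  have hexpβ : Real.exp (-(m:ℝ) * q ^ 2 / 2) ≤ β := by
    have hqm : 8 * ((2 + ε) / ε) ^ 2 = 2 / q ^ 2 := by
      rw [hqdef]; field_simp; ring
    have hL : Real.log (4 / β) ≤ (m:ℝ) * q ^ 2 / 2 := by
      have h1' : 2 / q ^ 2 * Real.log (4 / β) ≤ (m:ℝ) := by rw [← hqm]; linarith [hm]
      have h2' := mul_le_mul_of_nonneg_right h1' (le_of_lt (by positivity : (0:ℝ) < q ^ 2))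
      have h3' : 2 / q ^ 2 * Real.log (4 / β) * q ^ 2 = 2 * Real.log (4 / β) := by
        field_simp
      rw [h3'] at h2'
      linarith
    have h4' : Real.exp (-(m:ℝ) * q ^ 2 / 2) ≤ Real.exp (-Real.log (4 / β)) := by
      apply Real.exp_le_exp.mpr
      linarith
    have h5' : Real.exp (-Real.log (4 / β)) = β / 4 := by
      rw [Real.exp_neg, Real.exp_log (by positivity)]
      rw [inv_div]
    rw [h5'] at h4'
    linarith
  -- event manipulation
  rw [pr]
  have hsplit : ∀ xs : Fin m → (Fin d → Bool),
      (if ((1 / (m : ℝ)) * ∑ i, dist (h0 (xs i)) (f (xs i))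
              / (dist (h0 (xs i)) (f (xs i)) + dist (h1 (xs i)) (f (xs i)))
            < (1 / (m : ℝ)) * ∑ i, dist (h1 (xs i)) (f (xs i))
              / (dist (h0 (xs i)) (f (xs i)) + dist (h1 (xs i)) (f (xs i)))) then
          ∏ i, Hhat (xs i) else 0)
      = (∏ i, Hhat (xs i)) - (if (∑ i, g (xs i)) ≤ 0 then ∏ i, Hhat (xs i) else 0) := by
    intro xs
    have hsum : ∑ i, g (xs i) = (∑ i, r1 (xs i)) - (∑ i, r0 (xs i)) := by
      rw [← Finset.sum_sub_distrib]
    have hminv : (0:ℝ) < 1 / (m:ℝ) := by positivity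
    by_cases hc : (∑ i, g (xs i)) ≤ 0
    · have hnE : ¬ ((1 / (m : ℝ)) * ∑ i, r0 (xs i) < (1 / (m : ℝ)) * ∑ i, r1 (xs i)) := by
        rw [not_lt]
        apply mul_le_mul_of_nonneg_left _ (le_of_lt hminv)
        rw [hsum] at hc
        linarith
      simp only [hr0, hr1] at hnE
      rw [if_neg hnE, if_pos hc]
      ring
    · have hE : (1 / (m : ℝ)) * ∑ i, r0 (xs i) < (1 / (m : ℝ)) * ∑ i, r1 (xs i) := by
        apply mul_lt_mul_of_pos_left _ hminv
        rw [not_le, hsum] at hc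
        linarith
      simp only [hr0, hr1] at hE
      rw [if_pos hE, if_neg hc]
      ring
  rw [Finset.sum_congr rfl fun xs _ => hsplit xs]
  rw [Finset.sum_sub_distrib]
  have hone : ∑ xs : Fin m → (Fin d → Bool), ∏ i, Hhat (xs i) = 1 := by
    rw [← Fintype.sum_pow, hH1, one_pow]
  rw [hone]
  have : ∑ xs : Fin m → (Fin d → Bool), (if (∑ i, g (xs i)) ≤ 0 then ∏ i, Hhat (xs i) else 0) ≤ β :=
    le_trans hconc hexpβ
  linarith
end

section
/- Let d ≥ 1, let D be a distribution on {0,1}^d, let f, h_0, h_1 : {0,1}^d → {0,1}, let ε > 0, and let η ∈ (0,1). Suppose Pr_{x∼D}[h_1(x) ≠ f(x)] > (1+ε)·Pr_{x∼D}[h_0(x) ≠ f(x)] + η, and let S = {x : h_0(x) ≠ h_1(x)}. Then D(S) > η and Pr_{x∼D|_S}[h_0(x) ≠ f(x)] < 1/2 − ε/(2(2+ε)). -/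
/-- if `Pr_D[h1 ≠ f] > (1+ε)·Pr_D[h0 ≠ f] + η` and
`S = {x | h0 x ≠ h1 x}`, then `D(S) > η` and
`Pr_{D|_S}[h0 ≠ f] < 1/2 − ε/(2(2+ε))`. -/
theorem stmt12 (d : ℕ) (hd : 1 ≤ d)
    (D : (Fin d → Bool) → ℝ) (hD : IsDist D)
    (f h0 h1 : (Fin d → Bool) → Bool) (ε η : ℝ) (hε : 0 < ε)
    (hη0 : 0 < η) (hη1 : η < 1)
    (hyp : pr D (fun x => h1 x ≠ f x)
         > (1 + ε) * pr D (fun x => h0 x ≠ f x) + η) :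
    η < pr D (fun x => h0 x ≠ h1 x) ∧
    pr (fun x => (if h0 x ≠ h1 x then D x else 0) / pr D (fun x => h0 x ≠ h1 x))
        (fun x => h0 x ≠ f x)
      < 1 / 2 - ε / (2 * (2 + ε)) := by
  classical
  obtain ⟨hDnn, hDsum⟩ := hD
  set A := pr D (fun x => (h0 x ≠ f x) ∧ (h0 x ≠ h1 x)) with hA
  set B := pr D (fun x => (h1 x ≠ f x) ∧ (h0 x ≠ h1 x)) with hB
  set C := pr D (fun x => (h0 x ≠ f x) ∧ h0 x = h1 x) with hC
  have hnn : ∀ (P : (Fin d → Bool) → Prop), 0 ≤ pr D P := by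
    intro P
    apply Finset.sum_nonneg
    intro x _
    split_ifs
    · exact hDnn x
    · exact le_refl 0
  have hAnn : 0 ≤ A := hnn _
  have hBnn : 0 ≤ B := hnn _
  have hCnn : 0 ≤ C := hnn _
  have hp : pr D (fun x => h0 x ≠ f x) = A + C := by
    rw [hA, hC]
    unfold pr
    rw [← Finset.sum_add_distrib]
    apply Finset.sum_congr rfl
    intro x _
    cases hb0 : h0 x <;> cases hb1 : h1 x <;> cases hbf : f x <;>
      simp [hb0, hb1, hbf]
  have hq : pr D (fun x => h1 x ≠ f x) = B + C := by
    rw [hB, hC]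
    unfold pr
    rw [← Finset.sum_add_distrib]
    apply Finset.sum_congr rfl
    intro x _
    cases hb0 : h0 x <;> cases hb1 : h1 x <;> cases hbf : f x <;>
      simp [hb0, hb1, hbf]
  have hs : pr D (fun x => h0 x ≠ h1 x) = A + B := by
    rw [hA, hB]
    unfold pr
    rw [← Finset.sum_add_distrib]
    apply Finset.sum_congr rfl
    intro x _
    cases hb0 : h0 x <;> cases hb1 : h1 x <;> cases hbf : f x <;>
      simp [hb0, hb1, hbf]
  rw [hp, hq] at hyp
  have hkey : (2 + ε) * A + η < A + B := by nlinarith [mul_nonneg hε.le hCnn]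
  have hsgt : η < pr D (fun x => h0 x ≠ h1 x) := by
    rw [hs]; nlinarith [mul_nonneg hε.le hAnn]
  refine ⟨hsgt, ?_⟩
  have hspos : 0 < pr D (fun x => h0 x ≠ h1 x) := lt_trans hη0 hsgt
  have hcond : pr (fun x => (if h0 x ≠ h1 x then D x else 0) /
      pr D (fun x => h0 x ≠ h1 x)) (fun x => h0 x ≠ f x)
      = A / pr D (fun x => h0 x ≠ h1 x) := by
    rw [hA]
    unfold pr
    rw [Finset.sum_div]
    apply Finset.sum_congr rfl
    intro x _
    split_ifs with h1' h2' h2' <;> simp_all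
  rw [hcond]
  have heq : (1 : ℝ) / 2 - ε / (2 * (2 + ε)) = 1 / (2 + ε) := by
    field_simp
    ring
  rw [heq, div_lt_div_iff₀ hspos (by linarith : (0:ℝ) < 2 + ε), hs]
  nlinarith
end
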